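/- arXiv:2011.11927 — 3 statements merged into one kernel-verified Lean document; each statement's English description precedes it below -/
import Mathlib

section
/- Let Q := (I − η L ⊗ I_N) D where D is block diagonal with blocks I_N − μ H_k^T H_k, 0 < η < 1/λ_max(L), and λ_max(H_k^T H_k) < 1/μ for all k. For iterates satisfying χ^{(t+1)} − χ* = Q(χ^{(t)} − χ*), one has ‖χ^{(t+1)} − χ*‖ ≤ λ_max(D) ‖χ^{(t)} − χ*‖, and λ_max(D) < 1 provided each H_k^T H_k has positive minimum eigenvalue. -/
/-! By submultiplicativity `‖Q‖ ≤ ‖1 - η (L ⊗ I)‖ * ‖D‖`, and for a symmetric matrix the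
Euclidean operator norm is the largest absolute value of an eigenvalue. Both factors are block
diagonal up to reindexing (`L ⊗ I` carries `N` copies of `L`), and the spectrum of a block-diagonal
matrix is the union of the spectra of its blocks. Hence the spectrum of `1 - η (L ⊗ I)` lies in
`[1 - η λ_max(L), 1] ⊆ [0, 1]`, and that of `D` in `(0, 1)` because the spectrum of each
`H_kᵀ H_k` lies in `(0, 1/μ)`. -/

open Matrix Kronecker

theorem spectrum.exists_eq_one_sub_mul_of_mem_one_sub_smul {K A : Type*} [Field K] [Ring A]
    [Algebra K A] {a : A} {c : K} (hc : c ≠ 0) {x : K} (hx : x ∈ spectrum K (1 - c • a)) :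
    ∃ s ∈ spectrum K a, x = 1 - c * s := by
  rw [← map_one (algebraMap K A), ← spectrum.singleton_sub_eq,
    show c • a = Units.mk0 c hc • a from rfl, spectrum.unit_smul_eq_smul] at hx
  obtain ⟨_, rfl, _, ⟨s, hs, rfl⟩, rfl⟩ := hx
  exact ⟨s, hs, rfl⟩

namespace Matrix

variable {K : Type*} [Field K] {m n o : Type*}

theorem spectrum_submatrix_equiv [Fintype m] [Fintype n] [DecidableEq m] [DecidableEq n]
    (A : Matrix n n K) (e : m ≃ n) : spectrum K (A.submatrix e e) = spectrum K A :=
  AlgEquiv.spectrum_eq (reindexAlgEquiv K K e.symm) A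

theorem spectrum_blockDiagonal [Fintype m] [Fintype o] [DecidableEq m] [DecidableEq o]
    (B : o → Matrix m m K) : spectrum K (blockDiagonal B) = ⋃ k, spectrum K (B k) := by
  ext r
  have hsub : algebraMap K _ r - blockDiagonal B =
      blockDiagonal fun k => algebraMap K _ r - B k := by
    simp only [Algebra.algebraMap_eq_smul_one, ← blockDiagonal_one, ← blockDiagonal_smul,
      ← blockDiagonal_sub]
    rfl
  simp only [Set.mem_iUnion, spectrum.mem_iff, hsub, isUnit_iff_isUnit_det, det_blockDiagonal,
    isUnit_iff_ne_zero, Finset.prod_ne_zero_iff, Finset.mem_univ, true_implies, not_forall]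

theorem kronecker_one_eq_blockDiagonal [DecidableEq o] (A : Matrix m n K) :
    A ⊗ₖ (1 : Matrix o o K) = blockDiagonal fun _ => A := by
  ext ⟨i, k⟩ ⟨j, l⟩
  simp [blockDiagonal_apply, one_apply]

open scoped Norms.L2Operator

theorem sqrt_sum_sq_mulVec_le [Fintype m] [Fintype n] [DecidableEq n] (A : Matrix m n ℝ)
    (v : n → ℝ) : √(∑ i, (A *ᵥ v) i ^ 2) ≤ ‖A‖ * √(∑ i, v i ^ 2) := by
  simpa [EuclideanSpace.norm_eq] using A.l2_opNorm_mulVec (WithLp.toLp 2 v)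

theorem IsHermitian.l2_opNorm_le [Fintype n] [DecidableEq n] {A : Matrix n n ℝ}
    (hA : A.IsHermitian) {c : ℝ} (hc : 0 ≤ c) (h : ∀ x ∈ spectrum ℝ A, |x| ≤ c) : ‖A‖ ≤ c := by
  have := hA.isSelfAdjoint
  simpa [cfc_id ℝ A] using norm_cfc_le (f := id) (a := A) hc h

theorem l2_opNorm_one_sub_smul_kronecker_one_le_one [Fintype n] [Fintype o] [DecidableEq n]
    [DecidableEq o] {A : Matrix n n ℝ} (hA : A.PosSemidef) {lmax η : ℝ}
    (hlmax : ∀ x ∈ spectrum ℝ A, x ≤ lmax) (hη : 0 < η) (hηlmax : η * lmax ≤ 2) :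
    ‖1 - η • (A ⊗ₖ (1 : Matrix o o ℝ))‖ ≤ 1 := by
  rw [kronecker_one_eq_blockDiagonal]
  refine (isHermitian_one.sub ((isHermitian_blockDiagonal_iff.2 fun _ => hA.1).smul
    (.all η))).l2_opNorm_le zero_le_one fun x hx => ?_
  obtain ⟨y, hy, rfl⟩ := spectrum.exists_eq_one_sub_mul_of_mem_one_sub_smul hη.ne' hx
  rw [spectrum_blockDiagonal, Set.mem_iUnion] at hy
  obtain ⟨-, hy⟩ := hy
  have hy₀ : 0 ≤ y := (posSemidef_iff_isHermitian_and_spectrum_nonneg.1 hA).2 hy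
  have hy₁ := hlmax y hy
  rw [abs_le]
  constructor <;> nlinarith

theorem spectrum_blockDiagonal_one_sub_smul_subset_Ioo [Fintype m] [Fintype o] [DecidableEq m]
    [DecidableEq o] {A : o → Matrix m m ℝ} {μ : ℝ} (hμ : 0 < μ)
    (hlt : ∀ k, ∀ s ∈ spectrum ℝ (A k), s < 1 / μ) (hpos : ∀ k, ∀ s ∈ spectrum ℝ (A k), 0 < s) :
    spectrum ℝ (blockDiagonal fun k => 1 - μ • A k) ⊆ Set.Ioo 0 1 := by
  rw [spectrum_blockDiagonal, Set.iUnion_subset_iff]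
  intro k x hx
  obtain ⟨s, hs, rfl⟩ := spectrum.exists_eq_one_sub_mul_of_mem_one_sub_smul hμ.ne' hx
  have hs₁ : μ * s < 1 := (lt_div_iff₀' hμ).1 (hlt k s hs)
  have hs₀ := hpos k s hs
  constructor <;> nlinarith

end Matrix

open scoped Matrix.Norms.L2Operator

theorem cooperative_LMS_linear_convergence_general
    (K m N : ℕ)
    (G : SimpleGraph (Fin K)) [DecidableRel G.Adj]
    (lmax : ℝ) (hlmax : IsGreatest (spectrum ℝ (G.lapMatrix ℝ)) lmax)
    (η : ℝ) (hη : 0 < η) (hηlt : η < 1 / lmax)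
    (H : Fin K → Matrix (Fin m) (Fin N) ℝ)
    (μc : ℝ) (hμ : 0 < μc)
    (hspec : ∀ k : Fin K, ∀ x ∈ spectrum ℝ ((H k)ᵀ * H k), x < 1 / μc)
    (hmin : ∀ k : Fin K, ∀ x ∈ spectrum ℝ ((H k)ᵀ * H k), 0 < x)
    (D : Matrix (Fin K × Fin N) (Fin K × Fin N) ℝ)
    (hD : D = (Matrix.blockDiagonal
        (fun k : Fin K => (1 : Matrix (Fin N) (Fin N) ℝ) - μc • ((H k)ᵀ * H k))).submatrix
          Prod.swap Prod.swap)
    (Q : Matrix (Fin K × Fin N) (Fin K × Fin N) ℝ)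
    (hQ : Q = ((1 : Matrix (Fin K × Fin N) (Fin K × Fin N) ℝ)
        - η • (G.lapMatrix ℝ ⊗ₖ (1 : Matrix (Fin N) (Fin N) ℝ))) * D)
    (dmax : ℝ) (hdmax : IsGreatest (spectrum ℝ D) dmax)
    (χ : ℕ → (Fin K × Fin N → ℝ)) (χs : Fin K × Fin N → ℝ)
    (hiter : ∀ t : ℕ, χ (t + 1) - χs = Q *ᵥ (χ t - χs)) :
    (∀ t : ℕ,
      Real.sqrt (∑ i, (χ (t + 1) - χs) i ^ 2)
        ≤ dmax * Real.sqrt (∑ i, (χ t - χs) i ^ 2))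
    ∧ dmax < 1 := by
  have hDspec : spectrum ℝ D ⊆ Set.Ioo 0 1 := by
    rw [hD, show Prod.swap = ⇑(Equiv.prodComm (Fin K) (Fin N)) from rfl, spectrum_submatrix_equiv]
    exact spectrum_blockDiagonal_one_sub_smul_subset_Ioo hμ hspec hmin
  have hDherm : D.IsHermitian := by
    rw [hD]
    refine (isHermitian_blockDiagonal_iff.2 fun k => isHermitian_one.sub ?_).submatrix _
    simpa using (isHermitian_conjTranspose_mul_self (H k)).smul (.all μc)
  have hDnorm : ‖D‖ ≤ dmax := hDherm.l2_opNorm_le (hDspec hdmax.1).1.le fun x hx => by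
    rw [abs_of_pos (hDspec hx).1]
    exact hdmax.2 hx
  have hlmax_pos : 0 < lmax := one_div_pos.1 (hη.trans hηlt)
  have hPnorm : ‖1 - η • (G.lapMatrix ℝ ⊗ₖ (1 : Matrix (Fin N) (Fin N) ℝ))‖ ≤ 1 :=
    l2_opNorm_one_sub_smul_kronecker_one_le_one (G.posSemidef_lapMatrix ℝ) hlmax.2 hη
      (by rw [lt_div_iff₀ hlmax_pos] at hηlt; linarith)
  refine ⟨fun t => ?_, (hDspec hdmax.1).2⟩
  calc √(∑ i, (χ (t + 1) - χs) i ^ 2) ≤ ‖Q‖ * √(∑ i, (χ t - χs) i ^ 2) :=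
        hiter t ▸ Q.sqrt_sum_sq_mulVec_le _
    _ ≤ dmax * √(∑ i, (χ t - χs) i ^ 2) := by
        gcongr
        calc ‖Q‖ ≤ _ * ‖D‖ := hQ ▸ l2_opNorm_mul _ _
          _ ≤ 1 * dmax := by gcongr
          _ = dmax := one_mul dmax

/-- Let `Q := (I - η (L ⊗ I_N)) * D` with `D` block diagonal with blocks
`I_N - μ H_kᵀ H_k`, `0 < η < 1/λ_max(L)` and `λ_max(H_kᵀ H_k) < 1/μ` for all `k`. For iterates
satisfying `χ^{(t+1)} - χ* = Q (χ^{(t)} - χ*)`, the Euclidean norm of the error contracts by a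
factor `λ_max(D)`, and `λ_max(D) < 1` provided each `H_kᵀ H_k` has positive minimum eigenvalue. -/
theorem cooperative_LMS_linear_convergence
    (K m N : ℕ) (hK : 0 < K) (hN : 0 < N)
    (G : SimpleGraph (Fin K)) [DecidableRel G.Adj]
    (lmax : ℝ) (hlmax : IsGreatest (spectrum ℝ (G.lapMatrix ℝ)) lmax)
    (η : ℝ) (hη : 0 < η) (hηlt : η < 1 / lmax)
    (H : Fin K → Matrix (Fin m) (Fin N) ℝ)
    (μc : ℝ) (hμ : 0 < μc)
    (hspec : ∀ k : Fin K, ∀ x ∈ spectrum ℝ ((H k)ᵀ * H k), x < 1 / μc)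
    (hmin : ∀ k : Fin K, ∀ x ∈ spectrum ℝ ((H k)ᵀ * H k), 0 < x)
    (D : Matrix (Fin K × Fin N) (Fin K × Fin N) ℝ)
    (hD : D = (Matrix.blockDiagonal
        (fun k : Fin K => (1 : Matrix (Fin N) (Fin N) ℝ) - μc • ((H k)ᵀ * H k))).submatrix
          Prod.swap Prod.swap)
    (Q : Matrix (Fin K × Fin N) (Fin K × Fin N) ℝ)
    (hQ : Q = ((1 : Matrix (Fin K × Fin N) (Fin K × Fin N) ℝ)
        - η • (G.lapMatrix ℝ ⊗ₖ (1 : Matrix (Fin N) (Fin N) ℝ))) * D)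
    (dmax : ℝ) (hdmax : IsGreatest (spectrum ℝ D) dmax)
    (χ : ℕ → (Fin K × Fin N → ℝ)) (χs : Fin K × Fin N → ℝ)
    (hiter : ∀ t : ℕ, χ (t + 1) - χs = Q *ᵥ (χ t - χs)) :
    (∀ t : ℕ,
      Real.sqrt (∑ i, (χ (t + 1) - χs) i ^ 2)
        ≤ dmax * Real.sqrt (∑ i, (χ t - χs) i ^ 2))
    ∧ dmax < 1 :=
  cooperative_LMS_linear_convergence_general K m N G lmax hlmax η hη hηlt H μc hμ hspec hmin D hD Q
    hQ dmax hdmax χ χs hiter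
end

section
/- Let 0 < a < b, T ≥ 1, and let ω_k (k=0,…,T−1) be the Chebyshev PSOR factors for [a,b]. Then the polynomial β(λ) := ∏_{k=0}^{T−1}(1 − ω_k λ) satisfies sup_{λ∈[a,b]} |β(λ)| = 1 / |C_T((b+a)/(b−a))|, where C_T is the Chebyshev polynomial of the first kind. -/
section Aux
open Polynomial Polynomial.Chebyshev

lemma cheb_natDegree_le : ∀ n : ℕ, (T ℝ (n:ℤ)).natDegree ≤ n := by
  intro n
  induction n using Nat.twoStepInduction with
  | zero => simp [T_zero]
  | one => simp [T_one]
  | more n h1 h2 =>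
    have : T ℝ ((n:ℤ) + 2) = 2 * X * T ℝ ((n:ℤ) + 1) - T ℝ n := T_add_two ℝ n
    push_cast
    rw [this]
    refine (natDegree_sub_le _ _).trans (max_le ?_ (h1.trans (by omega)))
    refine (natDegree_mul_le).trans ?_
    have : ((2 : ℝ[X]) * X).natDegree ≤ 1 := (natDegree_mul_le).trans (by simp)
    have h2' : (T ℝ ((n:ℤ)+1)).natDegree ≤ n + 1 := by exact_mod_cast h2
    omega

lemma cheb_coeff : ∀ n : ℕ, (T ℝ ((n:ℤ)+1)).coeff (n+1) = 2^n := by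
  intro n
  induction n using Nat.twoStepInduction with
  | zero => simp [T_one]
  | one =>
    rw [show ((1:ℕ):ℤ)+1 = 2 by norm_num, T_two]
    simp [coeff_one]
  | more n h1 h2 =>
    push_cast at h2
    have e : T ℝ ((n:ℤ) + 2 + 1) = 2 * X * T ℝ ((n:ℤ) + 1 + 1) - T ℝ (n+1) := by
      have := T_add_two ℝ ((n:ℤ)+1)
      convert this using 2 <;> ring
    push_cast
    rw [e, coeff_sub]
    have hz : (T ℝ ((n:ℤ)+1)).coeff (n + 2 + 1) = 0 := by
      apply coeff_eq_zero_of_natDegree_lt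
      have := cheb_natDegree_le (n+1)
      push_cast at this ⊢
      omega
    have hx : ((2:ℝ[X]) * X * T ℝ ((n:ℤ)+1+1)).coeff (n+2+1)
        = 2 * (T ℝ ((n:ℤ)+1+1)).coeff (n+1+1) := by
      rw [mul_assoc, (map_ofNat Polynomial.C 2).symm, coeff_C_mul,
        show n+2+1 = (n+1+1)+1 by ring, coeff_X_mul]
    rw [hx, hz, h2]
    ring

lemma cheb_factor (m : ℕ) (r : ℕ → ℝ)
    (hinj : ∀ i < m+1, ∀ j < m+1, r i = r j → i = j)
    (hroot : ∀ k < m+1, (T ℝ ((m+1:ℕ):ℤ)).eval (r k) = 0) :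
    T ℝ ((m+1:ℕ):ℤ) = C ((2:ℝ)^m) * ∏ k ∈ Finset.range (m+1), (X - C (r k)) := by
  set P : ℝ[X] := ∏ k ∈ Finset.range (m+1), (X - C (r k)) with hP
  have hPm : P.Monic := monic_prod_of_monic _ _ (fun k _ => monic_X_sub_C _)
  have hPdeg : P.natDegree = m+1 := by
    rw [hP, natDegree_prod_of_monic _ _ (fun k _ => monic_X_sub_C _)]
    simp [natDegree_X_sub_C]
  set D : ℝ[X] := T ℝ ((m+1:ℕ):ℤ) - C ((2:ℝ)^m) * P with hD
  have hDcoeff : D.coeff (m+1) = 0 := by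
    have h1 : (T ℝ ((m+1:ℕ):ℤ)).coeff (m+1) = 2^m := by
      have := cheb_coeff m; push_cast at this ⊢; exact this
    have h2 : P.coeff (m+1) = 1 := by
      have := hPm.coeff_natDegree; rwa [hPdeg] at this
    rw [hD, coeff_sub, coeff_C_mul, h1, h2, mul_one, sub_self]
  have hDdeg : D.natDegree ≤ m+1 := by
    refine (natDegree_sub_le _ _).trans (max_le ?_ ?_)
    · have := cheb_natDegree_le (m+1); push_cast at this ⊢; exact this
    · exact (natDegree_C_mul_le _ _).trans hPdeg.le
  have heval : ∀ k : Fin (m+1), D.eval (r k) = 0 := by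
    intro k
    have hPe : P.eval (r k) = 0 := by
      rw [hP, eval_prod]
      exact Finset.prod_eq_zero (Finset.mem_range.mpr k.2) (by simp)
    rw [hD, eval_sub, eval_mul, hPe, mul_zero, sub_zero, hroot k k.2]
  have hf : Function.Injective (fun k : Fin (m+1) => r k) := by
    intro i j hij
    exact Fin.ext (hinj i i.2 j j.2 hij)
  have hD0 : D = 0 := by
    by_contra h
    have hne : D.natDegree ≠ m+1 := by
      intro he
      apply h
      rw [← leadingCoeff_eq_zero, leadingCoeff, he]
      exact hDcoeff
    have hlt : D.natDegree < m+1 := lt_of_le_of_ne hDdeg hne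
    exact h (eq_zero_of_natDegree_lt_card_of_eval_eq_zero D hf heval (by simpa using hlt))
  have := sub_eq_zero.mp hD0
  exact this

open Real in
lemma cheb_prod_eval (m : ℕ) (x : ℝ) :
    (T ℝ ((m+1:ℕ):ℤ)).eval x
      = 2^m * ∏ k ∈ Finset.range (m+1), (x - Real.cos ((2*(k:ℝ)+1)*π/(2*((m:ℝ)+1)))) := by
  have hθmem : ∀ k < m+1, (2*(k:ℝ)+1)*π/(2*((m:ℝ)+1)) ∈ Set.Icc 0 π := by
    intro k hk
    constructor
    · positivity
    · rw [div_le_iff₀ (by positivity)]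
      have : (k:ℝ) ≤ m := by exact_mod_cast Nat.lt_succ_iff.mp hk
      nlinarith [pi_pos]
  have hfac := cheb_factor m (fun k => Real.cos ((2*(k:ℝ)+1)*π/(2*((m:ℝ)+1))))
    (by
      intro i hi j hj hij
      have hθ := Real.injOn_cos (hθmem i hi) (hθmem j hj) hij
      field_simp at hθ
      have hij' : (i:ℝ) = j := by linarith
      exact_mod_cast hij')
    (by
      intro k hk
      rw [Polynomial.Chebyshev.T_real_cos]
      have harg : (((m+1:ℕ):ℤ):ℝ) * ((2*(k:ℝ)+1)*π/(2*((m:ℝ)+1))) = k*π + π/2 := by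
        push_cast
        field_simp
      rw [harg]
      simp [Real.cos_add, Real.sin_nat_mul_pi])
  rw [hfac]
  simp [Polynomial.eval_prod]

open Real in
lemma cheb_abs_eval_le (n : ℤ) (x : ℝ) (h1 : -1 ≤ x) (h2 : x ≤ 1) :
    |(T ℝ n).eval x| ≤ 1 := by
  rw [← Real.cos_arccos h1 h2, Polynomial.Chebyshev.T_real_cos]
  exact Real.abs_cos_le_one _

open Real in
lemma G_reflect (m : ℕ) (y : ℝ) :
    ∏ k ∈ Finset.range (m+1), (-y - Real.cos ((2*(k:ℝ)+1)*π/(2*((m:ℝ)+1))))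
      = (-1)^(m+1) * ∏ k ∈ Finset.range (m+1), (y - Real.cos ((2*(k:ℝ)+1)*π/(2*((m:ℝ)+1)))) := by
  have hc : ∀ k ∈ Finset.range (m+1),
      -y - cos ((2*(k:ℝ)+1)*π/(2*((m:ℝ)+1)))
        = (-1) * (y - cos ((2*((m-k:ℕ):ℝ)+1)*π/(2*((m:ℝ)+1)))) := by
    intro k hk
    have hk' : k ≤ m := Nat.lt_succ_iff.mp (Finset.mem_range.mp hk)
    have h1 : ((m-k:ℕ):ℝ) = (m:ℝ) - k := by
      push_cast [hk']; ring
    rw [h1]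
    have h2 : (2*((m:ℝ)-k)+1)*π/(2*((m:ℝ)+1)) = π - (2*(k:ℝ)+1)*π/(2*((m:ℝ)+1)) := by
      field_simp
      ring
    rw [h2, Real.cos_pi_sub]
    ring
  rw [Finset.prod_congr rfl hc, Finset.prod_mul_distrib, Finset.prod_const, Finset.card_range]
  congr 1
  have := Finset.prod_range_reflect
    (fun k => y - cos ((2*(k:ℝ)+1)*π/(2*((m:ℝ)+1)))) (m+1)
  simp only [Nat.add_sub_cancel] at this
  exact this


end Aux


open Real

/-- For `0 < a < b`, `T ≥ 1`, and Chebyshev PSOR factors `ω_k` for `[a, b]`,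
the polynomial `β(λ) := ∏_{k=0}^{T-1} (1 - ω_k λ)` satisfies
`sup_{λ ∈ [a,b]} |β(λ)| = 1 / |C_T((b+a)/(b-a))|`, where `C_T` is the Chebyshev polynomial
of the first kind (and the supremum is attained). -/
theorem chebyshev_PSOR_sup_abs_beta
    (a b : ℝ) (ha : 0 < a) (hab : a < b) (T : ℕ) (hT : 1 ≤ T)
    (ω : ℕ → ℝ)
    (hω : ∀ k < T,
      ω k = ((b + a) / 2 + ((b - a) / 2) * Real.cos ((2 * k + 1) * π / (2 * T)))⁻¹) :
    IsGreatest
      ((fun lam : ℝ => |∏ k ∈ Finset.range T, (1 - ω k * lam)|) '' Set.Icc a b)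
      (1 / |(Polynomial.Chebyshev.T ℝ T).eval ((b + a) / (b - a))|) := by
  obtain ⟨m, rfl⟩ : ∃ m, T = m + 1 := ⟨T - 1, by omega⟩
  have hh : (0:ℝ) < (b-a)/2 := by linarith
  set μ : ℝ := (b+a)/2 with hμ
  set h : ℝ := (b-a)/2 with hh'
  have hha : μ - h = a := by rw [hμ, hh']; ring
  have hhb : μ + h = b := by rw [hμ, hh']; ring
  have hμh : h < μ := by linarith
  set G : ℝ → ℝ :=
    fun y => ∏ k ∈ Finset.range (m+1), (y - Real.cos ((2*(k:ℝ)+1)*π/(2*((m:ℝ)+1)))) with hG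
  have hGeval : ∀ y : ℝ,
      (Polynomial.Chebyshev.T ℝ ((m+1:ℕ):ℤ)).eval y = 2^m * G y := fun y => cheb_prod_eval m y
  set c : ℕ → ℝ := fun k => μ + h * Real.cos ((2*(k:ℝ)+1)*π/(2*((m:ℝ)+1))) with hc
  have hcpos : ∀ k, 0 < c k := by
    intro k
    have h1 : -1 ≤ Real.cos ((2*(k:ℝ)+1)*π/(2*((m:ℝ)+1))) := Real.neg_one_le_cos _
    simp only [hc]
    nlinarith
  have hω' : ∀ k < m+1, ω k = (c k)⁻¹ := by
    intro k hk
    have := hω k hk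
    push_cast at this
    simpa [hc] using this
  have hc_lam : ∀ lam : ℝ,
      ∏ k ∈ Finset.range (m+1), (c k - lam) = (-h)^(m+1) * G ((lam-μ)/h) := by
    intro lam
    have : ∀ k ∈ Finset.range (m+1),
        c k - lam = (-h) * ((lam-μ)/h - Real.cos ((2*(k:ℝ)+1)*π/(2*((m:ℝ)+1)))) := by
      intro k _
      simp only [hc]
      field_simp
      ring
    rw [Finset.prod_congr rfl this, Finset.prod_mul_distrib, Finset.prod_const,
      Finset.card_range, hG]
  have hprod_pos : 0 < ∏ k ∈ Finset.range (m+1), c k :=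
    Finset.prod_pos (fun k _ => hcpos k)
  have h4 : ∏ k ∈ Finset.range (m+1), c k = (-h)^(m+1) * G ((0-μ)/h) := by
    simpa using hc_lam 0
  have h5 : G ((0-μ)/h) ≠ 0 := by
    intro h0
    rw [h0, mul_zero] at h4
    exact hprod_pos.ne' h4
  have h6 : ((-h):ℝ)^(m+1) ≠ 0 := pow_ne_zero _ (neg_ne_zero.mpr hh.ne')
  have hbeta : ∀ lam : ℝ,
      ∏ k ∈ Finset.range (m+1), (1 - ω k * lam) = G ((lam-μ)/h) / G ((0-μ)/h) := by
    intro lam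
    have h1 : (∏ k ∈ Finset.range (m+1), c k) * ∏ k ∈ Finset.range (m+1), (1 - ω k * lam)
        = ∏ k ∈ Finset.range (m+1), (c k - lam) := by
      rw [← Finset.prod_mul_distrib]
      refine Finset.prod_congr rfl ?_
      intro k hk
      rw [hω' k (Finset.mem_range.mp hk), inv_mul_eq_div, mul_sub, mul_one,
        mul_div_cancel₀ _ (hcpos k).ne']
    rw [eq_div_iff h5]
    apply mul_left_cancel₀ h6
    calc (-h)^(m+1) * ((∏ k ∈ Finset.range (m+1), (1 - ω k * lam)) * G ((0-μ)/h))
        = ((-h)^(m+1) * G ((0-μ)/h)) * ∏ k ∈ Finset.range (m+1), (1 - ω k * lam) := by ring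
      _ = (∏ k ∈ Finset.range (m+1), c k) * ∏ k ∈ Finset.range (m+1), (1 - ω k * lam) := by
          rw [← h4]
      _ = ∏ k ∈ Finset.range (m+1), (c k - lam) := h1
      _ = (-h)^(m+1) * G ((lam-μ)/h) := hc_lam lam
  have hGy0pos : 0 < G (μ/h) := by
    rw [hG]
    apply Finset.prod_pos
    intro k _
    have h1 : Real.cos ((2*(k:ℝ)+1)*π/(2*((m:ℝ)+1))) ≤ 1 := Real.cos_le_one _
    have h2 : (1:ℝ) < μ/h := (one_lt_div hh).mpr hμh
    linarith
  have hrefl : |G ((0-μ)/h)| = G (μ/h) := by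
    have hx0 : (0-μ)/h = -(μ/h) := by ring
    have := G_reflect m (μ/h)
    rw [hx0, hG]
    simp only [neg_sub]
    rw [show (∏ k ∈ Finset.range (m+1), (-(μ/h) - Real.cos ((2*(k:ℝ)+1)*π/(2*((m:ℝ)+1)))))
        = (-1)^(m+1) * ∏ k ∈ Finset.range (m+1), (μ/h - Real.cos ((2*(k:ℝ)+1)*π/(2*((m:ℝ)+1))))
      from this]
    rw [abs_mul, abs_pow, abs_neg, abs_one, one_pow, one_mul]
    exact abs_of_pos hGy0pos
  have habs : ∀ lam : ℝ,
      |∏ k ∈ Finset.range (m+1), (1 - ω k * lam)| = |G ((lam-μ)/h)| / G (μ/h) := by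
    intro lam
    rw [hbeta lam, abs_div, hrefl]
  have hy0 : (b+a)/(b-a) = μ/h := by
    have hba : b - a ≠ 0 := by linarith
    rw [hμ, hh']
    field_simp
  have htarget : 1 / |(Polynomial.Chebyshev.T ℝ ((m+1:ℕ):ℤ)).eval ((b+a)/(b-a))|
      = ((2:ℝ)^m)⁻¹ / G (μ/h) := by
    rw [hy0, hGeval, abs_mul, abs_pow, abs_two, abs_of_pos hGy0pos, one_div, mul_inv, ← one_div,
      div_eq_mul_inv]
    ring
  rw [show (1 / |(Polynomial.Chebyshev.T ℝ (((m+1:ℕ)):ℤ)).eval ((b + a) / (b - a))|)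
      = ((2:ℝ)^m)⁻¹ / G (μ/h) from htarget]
  constructor
  · refine ⟨b, ⟨hab.le, le_rfl⟩, ?_⟩
    simp only
    rw [habs b]
    have hb1 : (b-μ)/h = 1 := by
      rw [div_eq_one_iff_eq hh.ne']
      linarith
    rw [hb1]
    have he1 : (Polynomial.Chebyshev.T ℝ ((m+1:ℕ):ℤ)).eval 1 = 1 := by
      rw [← Real.cos_zero, Polynomial.Chebyshev.T_real_cos]
      simp
    have hG1 : G 1 = ((2:ℝ)^m)⁻¹ := by
      have := hGeval 1
      rw [he1] at this
      field_simp at this ⊢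
      linarith
    rw [hG1, abs_of_pos (by positivity)]
  · rintro v ⟨lam, ⟨hla, hlb⟩, rfl⟩
    simp only
    rw [habs lam]
    have hx1 : -1 ≤ (lam-μ)/h := by
      rw [le_div_iff₀ hh]
      linarith
    have hx2 : (lam-μ)/h ≤ 1 := by
      rw [div_le_one hh]
      linarith
    have hle := cheb_abs_eval_le ((m+1:ℕ):ℤ) _ hx1 hx2
    rw [hGeval, abs_mul, abs_pow, abs_two] at hle
    have hGle : |G ((lam-μ)/h)| ≤ ((2:ℝ)^m)⁻¹ := by
      rw [inv_eq_one_div, le_div_iff₀ (by positivity)]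
      linarith
    gcongr
end

section
/- Let B be symmetric with all eigenvalues in [a,b], 0 < a < b, and let ω_0,…,ω_{T−1} be the Chebyshev PSOR factors for [a,b]. Then the spectral radius of ∏_{k=0}^{T−1}(I − ω_k B) is at most 1/|C_T((b+a)/(b−a))| < 1. -/
/-!
The eigenvalues of `∏ (1 - ω_k B)` are the values `p(λ) = ∏ (1 - ω_k λ)` at the eigenvalues `λ`
of `B` (spectral mapping for the continuous functional calculus of symmetric matrices). The
reciprocals `1/ω_k` are the roots of `T_T` transported by the affine map `[-1, 1] → [a, b]`, so
`p` is that transported Chebyshev polynomial normalised by `p(0) = 1`: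
`p(λ) = T_T((2λ - b - a)/(b - a)) / T_T(-(b + a)/(b - a))`. On `[a, b]` the numerator has modulus
at most `1`, while the denominator has modulus `|T_T((b + a)/(b - a))| > 1` because
`(b + a)/(b - a) > 1`.
-/

open Real Polynomial

namespace Polynomial.Chebyshev

theorem eval_T_real_eq_leadingCoeff_mul_prod (n : ℕ) (y : ℝ) :
    (T ℝ n).eval y = (T ℝ n).leadingCoeff *
      ∏ k ∈ Finset.range n, (y - cos ((2 * k + 1) * π / (2 * n))) := by
  have hinj : Set.InjOn (fun k : ℕ ↦ cos ((2 * k + 1) * π / (2 * n))) (Finset.range n) :=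
    (Finset.range n).nodup_map_iff_injOn.mp (roots_T_real_nodup n)
  have hcard : Multiset.card (T ℝ n).roots = (T ℝ n).natDegree := by
    rw [roots_T_real, natDegree_T, Finset.card_val, Finset.card_image_of_injOn hinj]
    simp
  conv_lhs => rw [← C_leadingCoeff_mul_prod_multiset_X_sub_C hcard]
  rw [eval_mul, eval_C, eval_multiset_prod, roots_T_real, Multiset.map_map]
  simp only [Function.comp_def, eval_sub, eval_X, eval_C]
  rw [← Finset.prod_eq_multiset_prod, Finset.prod_image hinj]

theorem eval_T_real_div_eq (n : ℕ) (m : ℝ) {r : ℝ} (hr : r ≠ 0) (t : ℝ) :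
    (T ℝ n).eval ((t - m) / r) = (T ℝ n).leadingCoeff / r ^ n *
      ∏ k ∈ Finset.range n, (t - (m + r * cos ((2 * k + 1) * π / (2 * n)))) := by
  have hfactor (x : ℝ) : (t - m) / r - x = r⁻¹ * (t - (m + r * x)) := by field_simp; ring
  simp only [eval_T_real_eq_leadingCoeff_mul_prod, hfactor, Finset.prod_mul_distrib,
    Finset.prod_const, Finset.card_range, inv_pow]
  ring

theorem abs_eval_T_neg {R : Type*} [CommRing R] [LinearOrder R] [IsStrictOrderedRing R]
    (n : ℤ) (x : R) : |(T R n).eval (-x)| = |(T R n).eval x| := by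
  rw [T_eval_neg, abs_mul, ← Int.cast_abs, Int.abs_negOnePow, Int.cast_one, one_mul]

end Polynomial.Chebyshev

theorem prod_one_sub_inv_mul_eq_div {ι 𝕜 : Type*} [Field 𝕜] {s : Finset ι} {r : ι → 𝕜}
    (hr : ∀ i ∈ s, r i ≠ 0) {f : 𝕜 → 𝕜} {K : 𝕜} (hK : K ≠ 0)
    (hf : ∀ t, f t = K * ∏ i ∈ s, (t - r i)) (t : 𝕜) :
    ∏ i ∈ s, (1 - (r i)⁻¹ * t) = f t / f 0 := by
  rw [hf, hf, mul_div_mul_left _ _ hK, ← Finset.prod_div_distrib]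
  refine Finset.prod_congr rfl fun i hi ↦ ?_
  field_simp [hr i hi]
  ring

theorem IsSelfAdjoint.spectrum_aeval {A : Type*} [Ring A] [StarRing A] [TopologicalSpace A]
    [Algebra ℝ A] [ContinuousFunctionalCalculus ℝ A IsSelfAdjoint] {a : A}
    (ha : IsSelfAdjoint a) (q : ℝ[X]) :
    spectrum ℝ (aeval a q) = (fun t ↦ q.eval t) '' spectrum ℝ a := by
  rw [← cfc_polynomial q a, cfc_map_spectrum ..]

theorem list_prod_ofFn_one_sub_smul_eq_aeval {A : Type*} [Ring A] [Algebra ℝ A] (a : A)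
    (T : ℕ) (ω : ℕ → ℝ) :
    (List.ofFn fun k : Fin T ↦ (1 : A) - ω k • a).prod =
      aeval a (∏ k ∈ Finset.range T, (1 - C (ω k) * X)) := by
  rw [← Fin.prod_univ_eq_prod_range, ← List.prod_ofFn, map_list_prod, List.map_ofFn]
  congr 1
  refine List.ofFn_inj.mpr (funext fun k ↦ ?_)
  simp [Algebra.smul_def]

section ChebyshevPSOR

variable {a b : ℝ} {T : ℕ} {ω : ℕ → ℝ}

theorem prod_one_sub_chebyshevPSOR_mul_eq (ha : 0 < a) (hab : a < b)
    (hω : ∀ k < T,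
      ω k = ((b + a) / 2 + ((b - a) / 2) * cos ((2 * k + 1) * π / (2 * T)))⁻¹) (t : ℝ) :
    ∏ k ∈ Finset.range T, (1 - ω k * t) =
      (Chebyshev.T ℝ T).eval ((t - (b + a) / 2) / ((b - a) / 2)) /
        (Chebyshev.T ℝ T).eval (-((b + a) / (b - a))) := by
  have hr : (b - a) / 2 ≠ 0 := by linarith
  have hnode_ne_zero : ∀ k ∈ Finset.range T,
      (b + a) / 2 + (b - a) / 2 * cos ((2 * k + 1) * π / (2 * T)) ≠ 0 := fun k _ ↦ by
    nlinarith [neg_one_le_cos ((2 * k + 1) * π / (2 * T))]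
  have hK : (Chebyshev.T ℝ T).leadingCoeff / ((b - a) / 2) ^ T ≠ 0 := by
    simp [Chebyshev.leadingCoeff_T, hr]
  have hnorm := prod_one_sub_inv_mul_eq_div hnode_ne_zero hK
    (Chebyshev.eval_T_real_div_eq T ((b + a) / 2) hr) t
  have hc : (0 - (b + a) / 2) / ((b - a) / 2) = -((b + a) / (b - a)) := by
    field_simp
    ring
  rw [← hc, ← hnorm]
  exact Finset.prod_congr rfl fun k hk ↦ by rw [hω k (Finset.mem_range.mp hk)]

theorem abs_prod_one_sub_chebyshevPSOR_mul_le (ha : 0 < a) (hab : a < b)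
    (hω : ∀ k < T,
      ω k = ((b + a) / 2 + ((b - a) / 2) * cos ((2 * k + 1) * π / (2 * T)))⁻¹)
    {t : ℝ} (ht : t ∈ Set.Icc a b) :
    |∏ k ∈ Finset.range T, (1 - ω k * t)| ≤
      1 / |(Chebyshev.T ℝ T).eval ((b + a) / (b - a))| := by
  have hy : |(t - (b + a) / 2) / ((b - a) / 2)| ≤ 1 := by
    rw [abs_div, abs_of_pos (by linarith : 0 < (b - a) / 2), div_le_one (by linarith), abs_le]
    constructor <;> linarith [ht.1, ht.2]
  rw [prod_one_sub_chebyshevPSOR_mul_eq ha hab hω, abs_div, Chebyshev.abs_eval_T_neg]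
  gcongr
  exact Chebyshev.abs_eval_T_real_le_one _ hy

end ChebyshevPSOR

/-- Let `B` be symmetric with all eigenvalues in `[a, b]`, `0 < a < b`, and
let `ω_0, …, ω_{T-1}` be the Chebyshev PSOR factors for `[a, b]`. Then every eigenvalue of
`∏_{k=0}^{T-1} (I - ω_k B)` has absolute value at most `1 / |C_T((b+a)/(b-a))|`, which is
less than `1`. -/
theorem chebyshev_PSOR_spectral_radius_lt_one
    (n : ℕ) (a b : ℝ) (ha : 0 < a) (hab : a < b)
    (B : Matrix (Fin n) (Fin n) ℝ) (hB : B.IsSymm)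
    (hspec : spectrum ℝ B ⊆ Set.Icc a b)
    (T : ℕ) (hT : 1 ≤ T) (ω : ℕ → ℝ)
    (hω : ∀ k < T,
      ω k = ((b + a) / 2 + ((b - a) / 2) * Real.cos ((2 * k + 1) * π / (2 * T)))⁻¹) :
    (∀ μ ∈ spectrum ℝ
        ((List.ofFn fun k : Fin T =>
          (1 : Matrix (Fin n) (Fin n) ℝ) - ω k • B).prod),
      |μ| ≤ 1 / |(Polynomial.Chebyshev.T ℝ T).eval ((b + a) / (b - a))|)
    ∧ 1 / |(Polynomial.Chebyshev.T ℝ T).eval ((b + a) / (b - a))| < 1 := by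
  have hc : 1 < |(b + a) / (b - a)| := by
    rw [abs_of_pos (by apply div_pos <;> linarith), one_lt_div (by linarith)]
    linarith
  have hTc : 1 < |(Chebyshev.T ℝ T).eval ((b + a) / (b - a))| :=
    Chebyshev.one_lt_abs_eval_T_real (by omega) hc
  refine ⟨fun μ hμ ↦ ?_, (div_lt_one (by linarith)).mpr hTc⟩
  have hB' : IsSelfAdjoint B := Matrix.isHermitian_iff_isSymm.mpr hB
  rw [list_prod_ofFn_one_sub_smul_eq_aeval, hB'.spectrum_aeval] at hμ
  obtain ⟨t, ht, rfl⟩ := hμ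
  simpa [eval_prod] using abs_prod_one_sub_chebyshevPSOR_mul_le ha hab hω (hspec ht)
end
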